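/- Locally induced Holevo information of two-qubit Werner states: let ρ_W = e |Ψ_0⟩⟨Ψ_0| + ((1−e)/3) Σ_{i=1}^{3} |Ψ_i⟩⟨Ψ_i| for e ∈ [0,1]. Then C_A(ρ_W) = 1 − H((1+2e)/3) for e ∈ [1/4, 1], and C_A(ρ_W) = 1 − H((2−2e)/3) for e ∈ [0, 1/4], where H is the binary entropy function. -/

import Mathlib

noncomputable section
open scoped BigOperators Kronecker Matrix ComplexOrder
open Matrix

namespace QIT

def IsDensity {n : Type*} [Fintype n] [DecidableEq n] (ρ : Matrix n n ℂ) : Prop :=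
  ρ.PosSemidef ∧ ρ.trace = 1

noncomputable def vN {n : Type*} [Fintype n] [DecidableEq n] (ρ : Matrix n n ℂ) : ℝ :=
  if h : ρ.IsHermitian then ∑ i, -(h.eigenvalues i * Real.logb 2 (h.eigenvalues i)) else 0

def proj {n : Type*} (ψ : n → ℂ) : Matrix n n ℂ :=
  Matrix.of fun x y => ψ x * (starRingEnd ℂ) (ψ y)

def ptraceL {a b : Type*} [Fintype a] (ρ : Matrix (a × b) (a × b) ℂ) : Matrix b b ℂ :=
  Matrix.of fun i j => ∑ k, ρ (k, i) (k, j)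

def ptraceR {a b : Type*} [Fintype b] (ρ : Matrix (a × b) (a × b) ℂ) : Matrix a a ℂ :=
  Matrix.of fun i j => ∑ k, ρ (i, k) (j, k)

noncomputable def ent {X Y : Type*} [Fintype X] [Fintype Y] [DecidableEq Y]
    (ψ : X × Y → ℂ) : ℝ :=
  vN (ptraceL (proj ψ))

def IsPurification {A B : Type*} [Fintype A] [Fintype B] {dA' dB' : ℕ}
    (ρ : Matrix (A × B) (A × B) ℂ)
    (ψ : (A × Fin dA') × (B × Fin dB') → ℂ) : Prop :=
  (∑ x, ‖ψ x‖ ^ 2 = 1) ∧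
  ∀ a b a' b', ρ (a, b) (a', b') =
    ∑ a2 : Fin dA', ∑ b2 : Fin dB',
      ψ ((a, a2), (b, b2)) * (starRingEnd ℂ) (ψ ((a', a2), (b', b2)))

noncomputable def Ep {A B : Type*} [Fintype A] [Fintype B] [DecidableEq A] [DecidableEq B]
    (ρ : Matrix (A × B) (A × B) ℂ) : ℝ :=
  sInf { e : ℝ | ∃ (dA' dB' : ℕ) (ψ : (A × Fin dA') × (B × Fin dB') → ℂ),
    IsPurification ρ ψ ∧ e = ent ψ }

noncomputable def Iq {A B : Type*} [Fintype A] [Fintype B] [DecidableEq A] [DecidableEq B]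
    (ρ : Matrix (A × B) (A × B) ℂ) : ℝ :=
  vN (ptraceR ρ) + vN (ptraceL ρ) - vN ρ

open Classical in
noncomputable def msqrt {n : Type*} [Fintype n] [DecidableEq n] (M : Matrix n n ℂ) : Matrix n n ℂ :=
  if h : M.PosSemidef then
    h.1.eigenvectorUnitary.1 * diagonal ((↑) ∘ Real.sqrt ∘ h.1.eigenvalues) *
      (star h.1.eigenvectorUnitary : Matrix n n ℂ) else 0

noncomputable def fid {n : Type*} [Fintype n] [DecidableEq n] (ρ σ : Matrix n n ℂ) : ℝ :=
  ((msqrt (msqrt ρ * σ * msqrt ρ)).trace).re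

noncomputable def bures {n : Type*} [Fintype n] [DecidableEq n] (ρ σ : Matrix n n ℂ) : ℝ :=
  2 * Real.sqrt (1 - fid ρ σ)

noncomputable def traceNorm {n : Type*} [Fintype n] [DecidableEq n] (X : Matrix n n ℂ) : ℝ :=
  ((msqrt (Xᴴ * X)).trace).re

def IsPOVM {n : Type*} [Fintype n] [DecidableEq n] {k : ℕ} (M : Fin k → Matrix n n ℂ) : Prop :=
  (∀ i, (M i).PosSemidef) ∧ ∑ i, M i = 1

noncomputable def shannon {k : Type*} [Fintype k] (p : k → ℝ) : ℝ :=
  ∑ i, -(p i * Real.logb 2 (p i))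

noncomputable def miJoint {k l : Type*} [Fintype k] [Fintype l] (p : k × l → ℝ) : ℝ :=
  shannon (fun i => ∑ j, p (i, j)) + shannon (fun j => ∑ i, p (i, j)) - shannon p

noncomputable def Ic {A B : Type*} [Fintype A] [Fintype B] [DecidableEq A] [DecidableEq B]
    (ρ : Matrix (A × B) (A × B) ℂ) : ℝ :=
  sSup { e : ℝ | ∃ (k l : ℕ) (MA : Fin k → Matrix A A ℂ) (MB : Fin l → Matrix B B ℂ),
    IsPOVM MA ∧ IsPOVM MB ∧
    e = miJoint (fun ij : Fin k × Fin l => (((MA ij.1 ⊗ₖ MB ij.2) * ρ).trace).re) }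

noncomputable def probOf {A B : Type*} [Fintype A] [Fintype B] [DecidableEq A] [DecidableEq B]
    (M : Matrix A A ℂ) (ρ : Matrix (A × B) (A × B) ℂ) : ℝ :=
  (((M ⊗ₖ (1 : Matrix B B ℂ)) * ρ).trace).re

noncomputable def postB {A B : Type*} [Fintype A] [Fintype B] [DecidableEq A] [DecidableEq B]
    (M : Matrix A A ℂ) (ρ : Matrix (A × B) (A × B) ℂ) : Matrix B B ℂ :=
  ((probOf M ρ : ℂ))⁻¹ • ptraceL ((M ⊗ₖ (1 : Matrix B B ℂ)) * ρ)

noncomputable def CA {A B : Type*} [Fintype A] [Fintype B] [DecidableEq A] [DecidableEq B]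
    (ρ : Matrix (A × B) (A × B) ℂ) : ℝ :=
  sSup { c : ℝ | ∃ (k : ℕ) (M : Fin k → Matrix A A ℂ), IsPOVM M ∧
    c = vN (∑ i, (probOf (M i) ρ : ℂ) • postB (M i) ρ)
        - ∑ i, probOf (M i) ρ * vN (postB (M i) ρ) }

noncomputable def pauli : Fin 4 → Matrix (Fin 2) (Fin 2) ℂ :=
  ![1, !![0, 1; 1, 0], !![0, -Complex.I; Complex.I, 0], !![1, 0; 0, -1]]

noncomputable def bell0 : Fin 2 × Fin 2 → ℂ :=
  fun x => if x.1 = x.2 then ((Real.sqrt 2)⁻¹ : ℝ) else 0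

noncomputable def bell (i : Fin 4) : Fin 2 × Fin 2 → ℂ :=
  fun x => ∑ j, pauli i x.2 j * bell0 (x.1, j)

noncomputable def binEnt (x : ℝ) : ℝ :=
  -(x * Real.logb 2 x) - (1 - x) * Real.logb 2 (1 - x)

noncomputable def pauliChannel (p : Fin 4 → ℝ) (X : Matrix (Fin 2) (Fin 2) ℂ) :
    Matrix (Fin 2) (Fin 2) ℂ :=
  ∑ i, (p i : ℂ) • (pauli i * X * pauli i)

noncomputable def holevoCap (Λ : Matrix (Fin 2) (Fin 2) ℂ → Matrix (Fin 2) (Fin 2) ℂ) : ℝ :=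
  sSup { c : ℝ | ∃ (k : ℕ) (q : Fin k → ℝ) (ρs : Fin k → Matrix (Fin 2) (Fin 2) ℂ),
    (∀ i, 0 ≤ q i) ∧ (∑ i, q i = 1) ∧ (∀ i, IsDensity (ρs i)) ∧
    c = vN (∑ i, (q i : ℂ) • Λ (ρs i)) - ∑ i, q i * vN (Λ (ρs i)) }

def tensPow {A B : Type*} [Fintype A] [Fintype B]
    (ρ : Matrix (A × B) (A × B) ℂ) (n : ℕ) :
    Matrix ((Fin n → A) × (Fin n → B)) ((Fin n → A) × (Fin n → B)) ℂ :=
  Matrix.of fun x y => ∏ t, ρ (x.1 t, x.2 t) (y.1 t, y.2 t)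

/-!
Write `ρ_W = (1-e)/3 · 1 + (4e-1)/3 · |Ψ₀⟩⟨Ψ₀|`. Since `Tr_A ((M ⊗ 1) |Ψ₀⟩⟨Ψ₀|) = Mᵀ / 2`, a
POVM element `M` occurs with probability `tr M / 2` and leaves `B` in the state
`2(1-e)/3 · 1 + (4e-1)/(3 tr M) · Mᵀ`. The average state is always `1/2`, of entropy one.
Each post-measurement state has unit trace and determinant `x(1-x) + b² det M ≥ x(1-x)`,
where `x = (1+2e)/3`, so its eigenvalues are at least as close to `1/2` as `x` is and its
entropy is at least `H(x)`; rank-one measurements (`det M = 0`) attain this. Finally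
`H((2-2e)/3) = H(1-x) = H(x)`.
-/

lemma binEnt_eq_binEntropy_div_log (x : ℝ) : binEnt x = Real.binEntropy x / Real.log 2 := by
  simp only [binEnt, Real.binEntropy, Real.logb, Real.log_inv]
  ring

lemma binEnt_one_sub (x : ℝ) : binEnt (1 - x) = binEnt x := by
  simp [binEnt_eq_binEntropy_div_log]

lemma binEnt_two_inv : binEnt 2⁻¹ = 1 := by
  rw [binEnt_eq_binEntropy_div_log, Real.binEntropy_two_inv]
  exact div_self (Real.log_pos one_lt_two).ne'

lemma binEntropy_eq_binEntropy_two_inv_add_abs (x : ℝ) :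
    Real.binEntropy x = Real.binEntropy (2⁻¹ + |x - 2⁻¹|) := by
  rcases abs_cases (x - 2⁻¹) with ⟨h, -⟩ | ⟨h, -⟩
  · rw [h, add_sub_cancel]
  · rw [h, Real.binEntropy_two_inv_add, sub_neg_eq_add, add_sub_cancel]

/-- `x (1 - x) = 1/4 - (x - 1/2)²`, and `binEntropy` decreases in `|x - 1/2|`. -/
lemma binEntropy_le_of_mul_one_sub_le {x y : ℝ} (hx0 : 0 ≤ x) (hx1 : x ≤ 1)
    (h : x * (1 - x) ≤ y * (1 - y)) : Real.binEntropy x ≤ Real.binEntropy y := by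
  have habs : |y - 2⁻¹| ≤ |x - 2⁻¹| := sq_le_sq.mp (by nlinarith)
  have hx : |x - 2⁻¹| ≤ 2⁻¹ := abs_le.mpr ⟨by linarith, by linarith⟩
  rw [binEntropy_eq_binEntropy_two_inv_add_abs x, binEntropy_eq_binEntropy_two_inv_add_abs y]
  refine Real.binEntropy_strictAntiOn.antitoneOn ?_ ?_ (by linarith)
  · exact ⟨by linarith [abs_nonneg (y - 2⁻¹)], by linarith⟩
  · exact ⟨by linarith [abs_nonneg (x - 2⁻¹)], by linarith⟩

lemma binEnt_le_of_mul_one_sub_le {x y : ℝ} (hx0 : 0 ≤ x) (hx1 : x ≤ 1)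
    (h : x * (1 - x) ≤ y * (1 - y)) : binEnt x ≤ binEnt y := by
  rw [binEnt_eq_binEntropy_div_log, binEnt_eq_binEntropy_div_log]
  exact div_le_div_of_nonneg_right (binEntropy_le_of_mul_one_sub_le hx0 hx1 h)
    (Real.log_nonneg one_le_two)

section Qubit

variable {ρ : Matrix (Fin 2) (Fin 2) ℂ}

lemma exists_vN_eq_binEnt (hρ : ρ.IsHermitian) (htr : ρ.trace = 1) :
    ∃ l : ℝ, vN ρ = binEnt l ∧ l * (1 - l) = ρ.det.re := by
  have hsum : hρ.eigenvalues 1 = 1 - hρ.eigenvalues 0 := by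
    have h := hρ.trace_eq_sum_eigenvalues
    rw [htr, Fin.sum_univ_two] at h
    have h := congrArg Complex.re h
    simp only [Complex.one_re, Complex.coe_algebraMap, Complex.add_re, Complex.ofReal_re] at h
    linarith
  refine ⟨hρ.eigenvalues 0, ?_, ?_⟩
  · rw [vN, dif_pos hρ, Fin.sum_univ_two, hsum, binEnt]
    ring
  · rw [hρ.det_eq_prod_eigenvalues, Fin.prod_univ_two, hsum]
    simp

lemma vN_eq_binEnt_of_det (hρ : ρ.IsHermitian) (htr : ρ.trace = 1) {x : ℝ}
    (hdet : ρ.det.re = x * (1 - x)) : vN ρ = binEnt x := by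
  obtain ⟨l, hvN, hl⟩ := exists_vN_eq_binEnt hρ htr
  have : (l - x) * (l - (1 - x)) = 0 := by linear_combination -hl - hdet
  rcases mul_eq_zero.mp this with h | h
  · rw [hvN, sub_eq_zero.mp h]
  · rw [hvN, sub_eq_zero.mp h, binEnt_one_sub]

lemma binEnt_le_vN_of_le_det (hρ : ρ.IsHermitian) (htr : ρ.trace = 1) {x : ℝ}
    (hx0 : 0 ≤ x) (hx1 : x ≤ 1) (hdet : x * (1 - x) ≤ ρ.det.re) : binEnt x ≤ vN ρ := by
  obtain ⟨l, hvN, hl⟩ := exists_vN_eq_binEnt hρ htr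
  exact hvN ▸ binEnt_le_of_mul_one_sub_le hx0 hx1 (hl ▸ hdet)

lemma vN_two_inv_smul_one : vN ((2⁻¹ : ℂ) • (1 : Matrix (Fin 2) (Fin 2) ℂ)) = 1 := by
  have hherm : ((2⁻¹ : ℂ) • (1 : Matrix (Fin 2) (Fin 2) ℂ)).IsHermitian :=
    isHermitian_one.smul (IsSelfAdjoint.ofNat 2).inv₀
  rw [vN_eq_binEnt_of_det hherm (x := 2⁻¹), binEnt_two_inv]
  · rw [trace_smul, trace_one]
    norm_num
  · rw [det_smul, det_one]
    norm_num

end Qubit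

lemma trace_eq_ofReal_re {n : Type*} [Fintype n] {M : Matrix n n ℂ} (hM : M.IsHermitian) :
    M.trace = (M.trace.re : ℂ) :=
  (Complex.conj_eq_iff_re.mp (by simpa [hM.eq] using (trace_conjTranspose M).symm)).symm

lemma isHermitian_smul_one_add_smul_transpose (a b : ℝ) {M : Matrix (Fin 2) (Fin 2) ℂ}
    (hM : M.IsHermitian) :
    ((a : ℂ) • (1 : Matrix (Fin 2) (Fin 2) ℂ) + (b : ℂ) • Mᵀ).IsHermitian :=
  (isHermitian_one.smul (Complex.conj_ofReal a)).add (hM.transpose.smul (Complex.conj_ofReal b))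

section SmulOneAddSmulTranspose

variable (a b : ℂ) (M : Matrix (Fin 2) (Fin 2) ℂ)

lemma trace_smul_one_add_smul_transpose :
    (a • (1 : Matrix (Fin 2) (Fin 2) ℂ) + b • Mᵀ).trace = 2 * a + b * M.trace := by
  simp only [trace_add, trace_smul, trace_one, Fintype.card_fin, Nat.cast_ofNat, smul_eq_mul,
    trace_transpose]
  ring

lemma det_smul_one_add_smul_transpose :
    (a • (1 : Matrix (Fin 2) (Fin 2) ℂ) + b • Mᵀ).det =
      a ^ 2 + a * b * M.trace + b ^ 2 * M.det := by
  simp only [det_fin_two, trace_fin_two, Matrix.add_apply, Matrix.smul_apply, one_apply,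
    transpose_apply, smul_eq_mul, Fin.reduceEq, ↓reduceIte, mul_one, mul_zero, zero_add]
  ring

end SmulOneAddSmulTranspose

lemma ofReal_sqrt_two_sq : ((Real.sqrt 2 : ℝ) : ℂ) ^ 2 = 2 := by
  rw [← Complex.ofReal_pow, Real.sq_sqrt zero_le_two, Complex.ofReal_ofNat]

lemma bell_zero : bell 0 = bell0 := by
  ext ⟨a, b⟩
  fin_cases a <;> fin_cases b <;> simp [bell, pauli, bell0]

lemma sum_proj_bell : ∑ i, proj (bell i) = 1 := by
  rw [Fin.sum_univ_four]
  ext ⟨a, b⟩ ⟨c, d⟩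
  fin_cases a <;> fin_cases b <;> fin_cases c <;> fin_cases d <;>
    simp [proj, bell, pauli, bell0, one_apply] <;> ring_nf <;> simp [ofReal_sqrt_two_sq] <;>
    norm_num

section PartialTrace

variable {a b : Type*} [Fintype a]

lemma trace_ptraceL [Fintype b] (X : Matrix (a × b) (a × b) ℂ) :
    (ptraceL X).trace = X.trace := by
  simp only [ptraceL, trace, diag, of_apply, Fintype.sum_prod_type]
  exact Finset.sum_comm

lemma ptraceL_add (X Y : Matrix (a × b) (a × b) ℂ) :
    ptraceL (X + Y) = ptraceL X + ptraceL Y := by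
  ext i j
  simp [ptraceL, Finset.sum_add_distrib]

lemma ptraceL_smul (c : ℂ) (X : Matrix (a × b) (a × b) ℂ) :
    ptraceL (c • X) = c • ptraceL X := by
  ext i j
  simp [ptraceL, Finset.mul_sum]

lemma ptraceL_kronecker (M : Matrix a a ℂ) (N : Matrix b b ℂ) :
    ptraceL (M ⊗ₖ N) = M.trace • N := by
  ext i j
  simp [ptraceL, trace, Finset.sum_mul]

end PartialTrace

lemma ptraceL_kronecker_one_mul_proj_bell0 (M : Matrix (Fin 2) (Fin 2) ℂ) :
    ptraceL ((M ⊗ₖ (1 : Matrix (Fin 2) (Fin 2) ℂ)) * proj bell0) =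
      (2⁻¹ : ℂ) • Mᵀ := by
  ext i j
  fin_cases i <;> fin_cases j <;>
    simp [ptraceL, proj, bell0, mul_apply, Fintype.sum_prod_type, one_apply] <;> ring_nf <;>
    simp [ofReal_sqrt_two_sq]

/-- The Holevo quantity `χ` of the ensemble `{pᵢ, ρᵢ^B}` that the measurement `M` on `A`
induces on `B`; `CA ρ` is its supremum over POVMs. -/
def inducedHolevo {A B : Type*} [Fintype A] [Fintype B] [DecidableEq A] [DecidableEq B]
    (ρ : Matrix (A × B) (A × B) ℂ) {k : ℕ} (M : Fin k → Matrix A A ℂ) : ℝ :=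
  vN (∑ i, (probOf (M i) ρ : ℂ) • postB (M i) ρ) -
    ∑ i, probOf (M i) ρ * vN (postB (M i) ρ)

lemma CA_eq_sSup_inducedHolevo {A B : Type*} [Fintype A] [Fintype B] [DecidableEq A]
    [DecidableEq B] (ρ : Matrix (A × B) (A × B) ℂ) :
    CA ρ =
      sSup {c | ∃ (k : ℕ) (M : Fin k → Matrix A A ℂ), IsPOVM M ∧ c = inducedHolevo ρ M} :=
  rfl

lemma isPOVM_diagonal_single (n : ℕ) :
    IsPOVM (fun i : Fin n => (diagonal (Pi.single i 1) : Matrix (Fin n) (Fin n) ℂ)) := by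
  refine ⟨fun i => posSemidef_diagonal_iff.mpr (Pi.single_nonneg.mpr zero_le_one), ?_⟩
  have hsum := map_sum (diagonalAddMonoidHom (Fin n) ℂ) (fun i => Pi.single i 1) Finset.univ
  simp only [diagonalAddMonoidHom_apply, Finset.univ_sum_single] at hsum
  rw [← hsum, diagonal_one]

/-- The Werner state `ρ_W`, rewritten by completeness of the Bell basis (`werner_eq`). -/
def werner (e : ℝ) : Matrix (Fin 2 × Fin 2) (Fin 2 × Fin 2) ℂ :=
  (((1 - e) / 3 : ℝ) : ℂ) • 1 + (((4 * e - 1) / 3 : ℝ) : ℂ) • proj bell0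

lemma werner_eq (e : ℝ) :
    (e : ℂ) • proj (bell 0) +
      (((1 - e) / 3 : ℝ) : ℂ) • (proj (bell 1) + proj (bell 2) + proj (bell 3)) =
      werner e := by
  have hrest : proj (bell 1) + proj (bell 2) + proj (bell 3) = 1 - proj (bell 0) := by
    rw [← sum_proj_bell, Fin.sum_univ_four]
    abel
  rw [hrest, bell_zero, werner, smul_sub]
  match_scalars <;> ring

section Werner

variable (e : ℝ)

lemma ptraceL_werner (M : Matrix (Fin 2) (Fin 2) ℂ) :
    ptraceL ((M ⊗ₖ (1 : Matrix (Fin 2) (Fin 2) ℂ)) * werner e) =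
      ((((1 - e) / 3 : ℝ) : ℂ) * M.trace) • 1 + (((4 * e - 1) / 6 : ℝ) : ℂ) • Mᵀ := by
  rw [werner, mul_add, mul_smul_comm, mul_smul_comm, mul_one, ptraceL_add, ptraceL_smul,
    ptraceL_smul, ptraceL_kronecker, ptraceL_kronecker_one_mul_proj_bell0, smul_smul, smul_smul,
    mul_comm]
  match_scalars <;> ring

lemma probOf_werner (M : Matrix (Fin 2) (Fin 2) ℂ) : probOf M (werner e) = M.trace.re / 2 := by
  rw [probOf, ← trace_ptraceL, ptraceL_werner, trace_smul_one_add_smul_transpose,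
    show 2 * ((((1 - e) / 3 : ℝ) : ℂ) * M.trace) + (((4 * e - 1) / 6 : ℝ) : ℂ) * M.trace
      = ((2⁻¹ : ℝ) : ℂ) * M.trace by push_cast; ring, Complex.re_ofReal_mul]
  ring

variable {M : Matrix (Fin 2) (Fin 2) ℂ} {m : ℝ}

lemma postB_werner (htr : M.trace = m) (hm : m ≠ 0) :
    postB M (werner e) =
      ((2 * (1 - e) / 3 : ℝ) : ℂ) • 1 + (((4 * e - 1) / (3 * m) : ℝ) : ℂ) • Mᵀ := by
  rw [postB, probOf_werner, ptraceL_werner, htr, Complex.ofReal_re, smul_add, smul_smul, smul_smul]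
  congr 2 <;> push_cast <;> field_simp
  ring

lemma trace_postB_werner (htr : M.trace = m) (hm : m ≠ 0) : (postB M (werner e)).trace = 1 := by
  rw [postB_werner e htr hm, trace_smul_one_add_smul_transpose, htr]
  push_cast
  field_simp
  ring

lemma re_det_postB_werner (htr : M.trace = m) (hm : m ≠ 0) :
    (postB M (werner e)).det.re = (1 + 2 * e) / 3 * (1 - (1 + 2 * e) / 3)
      + ((4 * e - 1) / (3 * m)) ^ 2 * M.det.re := by
  rw [postB_werner e htr hm, det_smul_one_add_smul_transpose, htr]
  have : (((2 * (1 - e) / 3 : ℝ) : ℂ)) ^ 2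
      + ((2 * (1 - e) / 3 : ℝ) : ℂ) * (((4 * e - 1) / (3 * m) : ℝ) : ℂ) * m
      = (((1 + 2 * e) / 3 * (1 - (1 + 2 * e) / 3) : ℝ) : ℂ) := by
    push_cast
    field_simp
    ring
  rw [this, ← Complex.ofReal_pow, Complex.add_re, Complex.ofReal_re, Complex.re_ofReal_mul]

lemma isHermitian_postB_werner (hM : M.IsHermitian) (htr : M.trace = m) (hm : m ≠ 0) :
    (postB M (werner e)).IsHermitian := by
  rw [postB_werner e htr hm]
  exact isHermitian_smul_one_add_smul_transpose _ _ hM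

lemma binEnt_le_vN_postB_werner (he0 : 0 ≤ e) (he1 : e ≤ 1) (hM : M.PosSemidef)
    (htr : M.trace = m) (hm : m ≠ 0) : binEnt ((1 + 2 * e) / 3) ≤ vN (postB M (werner e)) := by
  refine binEnt_le_vN_of_le_det (isHermitian_postB_werner e hM.1 htr hm)
    (trace_postB_werner e htr hm) (by linarith) (by linarith) ?_
  rw [re_det_postB_werner e htr hm]
  have hdet : 0 ≤ M.det.re := (Complex.nonneg_iff.mp hM.det_nonneg).1
  nlinarith [sq_nonneg ((4 * e - 1) / (3 * m))]

lemma vN_postB_werner_of_det_eq_zero (hM : M.IsHermitian) (htr : M.trace = m) (hm : m ≠ 0)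
    (hdet : M.det = 0) : vN (postB M (werner e)) = binEnt ((1 + 2 * e) / 3) := by
  refine vN_eq_binEnt_of_det (isHermitian_postB_werner e hM htr hm)
    (trace_postB_werner e htr hm) ?_
  rw [re_det_postB_werner e htr hm, hdet, Complex.zero_re, mul_zero, add_zero]

lemma smul_postB_werner (hM : M.PosSemidef) :
    (probOf M (werner e) : ℂ) • postB M (werner e) =
      ptraceL ((M ⊗ₖ (1 : Matrix (Fin 2) (Fin 2) ℂ)) * werner e) := by
  rcases eq_or_ne (probOf M (werner e)) 0 with h | h
  · -- `postB` divides by `probOf`, but an outcome of probability zero has `M = 0`.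
    have hM0 : M = 0 := by
      rw [probOf_werner] at h
      rw [← hM.trace_eq_zero_iff, trace_eq_ofReal_re hM.1, show M.trace.re = 0 by linarith,
        Complex.ofReal_zero]
    subst hM0
    ext i j
    simp [h, ptraceL]
  · rw [postB, smul_smul, mul_inv_cancel₀ (Complex.ofReal_ne_zero.mpr h), one_smul]

end Werner

section WernerPOVM

variable (e : ℝ) {k : ℕ} {M : Fin k → Matrix (Fin 2) (Fin 2) ℂ}

lemma sum_probOf_werner (hM : ∑ i, M i = 1) :
    ∑ i, probOf (M i) (werner e) = 1 := by
  simp_rw [probOf_werner, ← Finset.sum_div, ← Complex.re_sum, ← trace_sum, hM, trace_one]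
  norm_num

lemma sum_smul_postB_werner (hM : IsPOVM M) :
    ∑ i, (probOf (M i) (werner e) : ℂ) • postB (M i) (werner e) =
      (2⁻¹ : ℂ) • (1 : Matrix (Fin 2) (Fin 2) ℂ) := by
  simp_rw [smul_postB_werner e (hM.1 _), ptraceL_werner, Finset.sum_add_distrib, ← Finset.sum_smul,
    ← Finset.smul_sum, ← Finset.mul_sum, ← trace_sum, ← transpose_sum, hM.2, trace_one,
    transpose_one, ← add_smul]
  congr 1
  simp only [Fintype.card_fin]
  push_cast
  ring

lemma inducedHolevo_werner_le (he0 : 0 ≤ e) (he1 : e ≤ 1) (hM : IsPOVM M) :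
    inducedHolevo (werner e) M ≤ 1 - binEnt ((1 + 2 * e) / 3) := by
  rw [inducedHolevo, sum_smul_postB_werner e hM, vN_two_inv_smul_one, sub_le_sub_iff_left]
  calc binEnt ((1 + 2 * e) / 3)
      = ∑ i, probOf (M i) (werner e) * binEnt ((1 + 2 * e) / 3) := by
        rw [← Finset.sum_mul, sum_probOf_werner e hM.2, one_mul]
    _ ≤ ∑ i, probOf (M i) (werner e) * vN (postB (M i) (werner e)) := by
        refine Finset.sum_le_sum fun i _ => ?_
        have htr := trace_eq_ofReal_re (hM.1 i).1
        have hp : probOf (M i) (werner e) = (M i).trace.re / 2 := probOf_werner e (M i)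
        rcases eq_or_ne (M i).trace.re 0 with h | h
        · simp [hp, h]
        · refine mul_le_mul_of_nonneg_left (binEnt_le_vN_postB_werner e he0 he1 (hM.1 i) htr h) ?_
          rw [hp]
          exact div_nonneg (Complex.nonneg_iff.mp (hM.1 i).trace_nonneg).1 zero_le_two

/-- Any rank-one measurement attains the bound, as its elements have `det = 0`. -/
lemma inducedHolevo_werner_diagonal_single :
    inducedHolevo (werner e) (fun i : Fin 2 => diagonal (Pi.single i 1)) =
      1 - binEnt ((1 + 2 * e) / 3) := by
  have hM := isPOVM_diagonal_single 2
  rw [inducedHolevo, sum_smul_postB_werner e hM, vN_two_inv_smul_one]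
  have hvN (i : Fin 2) :
      vN (postB (diagonal (Pi.single i 1)) (werner e)) = binEnt ((1 + 2 * e) / 3) := by
    refine vN_postB_werner_of_det_eq_zero e (hM.1 i).1 (m := 1) ?_ one_ne_zero ?_ <;>
      fin_cases i <;> simp
  simp_rw [hvN, ← Finset.sum_mul, sum_probOf_werner e hM.2, one_mul]

theorem CA_werner (he0 : 0 ≤ e) (he1 : e ≤ 1) :
    CA (werner e) = 1 - binEnt ((1 + 2 * e) / 3) := by
  rw [CA_eq_sSup_inducedHolevo]
  refine IsGreatest.csSup_eq ⟨⟨2, _, isPOVM_diagonal_single 2,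
    (inducedHolevo_werner_diagonal_single e).symm⟩, ?_⟩
  rintro c ⟨k, M, hM, rfl⟩
  exact inducedHolevo_werner_le e he0 he1 hM

end WernerPOVM

/-- locally induced Holevo information of two-qubit Werner states
ρ_W = e|Ψ₀⟩⟨Ψ₀| + ((1−e)/3)Σᵢ|Ψᵢ⟩⟨Ψᵢ|. -/
theorem stmt19 (e : ℝ) (he0 : 0 ≤ e) (he1 : e ≤ 1) :
    (1 / 4 ≤ e →
      CA ((e : ℂ) • proj (bell 0) +
          (((1 - e) / 3 : ℝ) : ℂ) • (proj (bell 1) + proj (bell 2) + proj (bell 3))) =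
        1 - binEnt ((1 + 2 * e) / 3)) ∧
    (e ≤ 1 / 4 →
      CA ((e : ℂ) • proj (bell 0) +
          (((1 - e) / 3 : ℝ) : ℂ) • (proj (bell 1) + proj (bell 2) + proj (bell 3))) =
        1 - binEnt ((2 - 2 * e) / 3)) := by
  rw [werner_eq, CA_werner e he0 he1, show (2 - 2 * e) / 3 = 1 - (1 + 2 * e) / 3 by ring,
    binEnt_one_sub]
  exact ⟨fun _ => rfl, fun _ => rfl⟩

end QIT
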